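/- arXiv:2206.11439 — 7 statements merged into one kernel-verified Lean document; each statement's English description precedes it below -/
import Mathlib

section
/- Let τ > 0, ε ≥ 0, 0 ≤ η < 1 with τε ≤ 1, speed limits v_min ≤ v_max, and acceleration limits a_min ≤ a_max satisfying ε·v_min − η·a_min < (1 − η)·a_max. If v ≥ v_min and u_prev ≥ a_min, then a_lo = (v_min − (1 − τε)v − τη·u_prev)/(τ(1 − η)) satisfies a_lo < a_max. -/
/-! The numerator of `a_lo` is antitone in `v` and in `u_prev` (their coefficients `1 - τε` and
`τη` are nonnegative), so it is largest at `v = v_min`, `u_prev = a_min`, where it equals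
`τ (ε v_min - η a_min)`; the compatibility condition bounds this by `τ (1 - η) a_max`. -/

lemma aLo_numerator_le (τ ε η vmin amin v uprev : ℝ)
    (hτε : τ * ε ≤ 1) (hτη : 0 ≤ τ * η) (hvlb : vmin ≤ v) (huprev : amin ≤ uprev) :
    vmin - (1 - τ * ε) * v - τ * η * uprev ≤ τ * (ε * vmin - η * amin) :=
  calc vmin - (1 - τ * ε) * v - τ * η * uprev
      ≤ vmin - (1 - τ * ε) * vmin - τ * η * amin := by
        have : 0 ≤ 1 - τ * ε := sub_nonneg.mpr hτε
        gcongr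
    _ = τ * (ε * vmin - η * amin) := by ring

theorem a_lo_lt_a_max_general
    (τ ε η vmin amin amax v uprev : ℝ)
    (hτ : 0 < τ) (hη0 : 0 ≤ η) (hη1 : η < 1)
    (hτε : τ * ε ≤ 1)
    (hcond : ε * vmin - η * amin < (1 - η) * amax)
    (hvlb : vmin ≤ v) (huprev : amin ≤ uprev) :
    (vmin - (1 - τ * ε) * v - τ * η * uprev) / (τ * (1 - η)) < amax := by
  rw [div_lt_iff₀ (mul_pos hτ (sub_pos.mpr hη1))]
  calc vmin - (1 - τ * ε) * v - τ * η * uprev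
      ≤ τ * (ε * vmin - η * amin) :=
        aLo_numerator_le τ ε η vmin amin v uprev hτε (mul_nonneg hτ.le hη0) hvlb huprev
    _ < τ * ((1 - η) * amax) := mul_lt_mul_of_pos_left hcond hτ
    _ = amax * (τ * (1 - η)) := by ring

/-- the lower speed-limit control bound `a_lo` is strictly
below the maximum acceleration `a_max`. -/
theorem a_lo_lt_a_max
    (τ ε η vmin vmax amin amax v uprev : ℝ)
    (hτ : 0 < τ) (hε : 0 ≤ ε) (hη0 : 0 ≤ η) (hη1 : η < 1)
    (hτε : τ * ε ≤ 1) (hv : vmin ≤ vmax) (ha : amin ≤ amax)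
    (hcond : ε * vmin - η * amin < (1 - η) * amax)
    (hvlb : vmin ≤ v) (huprev : amin ≤ uprev) :
    (vmin - (1 - τ * ε) * v - τ * η * uprev) / (τ * (1 - η)) < amax :=
  a_lo_lt_a_max_general τ ε η vmin amin amax v uprev hτ hη0 hη1 hτε hcond hvlb huprev
end

section
/- Let τ > 0, ε ≥ 0, 0 ≤ η < 1 with τε ≤ 1, speed limits v_min ≤ v_max, and acceleration limits a_min ≤ a_max satisfying ε·v_max − η·a_max > (1 − η)·a_min. If v ≤ v_max and u_prev ≤ a_max, then a_hi = (v_max − (1 − τε)v − τη·u_prev)/(τ(1 − η)) satisfies a_hi > a_min. -/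
theorem mul_sub_mul_le_sub_mul_sub_mul {τ ε η vmax amax v uprev : ℝ} (hτ : 0 ≤ τ) (hη : 0 ≤ η)
    (hτε : τ * ε ≤ 1) (hv : v ≤ vmax) (hu : uprev ≤ amax) :
    τ * (ε * vmax - η * amax) ≤ vmax - (1 - τ * ε) * v - τ * η * uprev := by
  have hτε' : 0 ≤ 1 - τ * ε := sub_nonneg.2 hτε
  calc τ * (ε * vmax - η * amax) = vmax - (1 - τ * ε) * vmax - τ * η * amax := by ring
    _ ≤ vmax - (1 - τ * ε) * v - τ * η * uprev := by gcongr

theorem a_hi_gt_a_min_general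
    (τ ε η vmax amin amax v uprev : ℝ)
    (hτ : 0 < τ) (hη0 : 0 ≤ η) (hη1 : η < 1)
    (hτε : τ * ε ≤ 1)
    (hcond : ε * vmax - η * amax > (1 - η) * amin)
    (hvub : v ≤ vmax) (huprev : uprev ≤ amax) :
    (vmax - (1 - τ * ε) * v - τ * η * uprev) / (τ * (1 - η)) > amin := by
  rw [gt_iff_lt, lt_div_iff₀ (mul_pos hτ (sub_pos.2 hη1))]
  calc amin * (τ * (1 - η)) = τ * ((1 - η) * amin) := by ring
    _ < τ * (ε * vmax - η * amax) := mul_lt_mul_of_pos_left hcond hτ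
    _ ≤ _ := mul_sub_mul_le_sub_mul_sub_mul hτ.le hη0 hτε hvub huprev

/-- the upper speed-limit control bound `a_hi` is strictly
above the minimum acceleration `a_min`. -/
theorem a_hi_gt_a_min
    (τ ε η vmin vmax amin amax v uprev : ℝ)
    (hτ : 0 < τ) (hε : 0 ≤ ε) (hη0 : 0 ≤ η) (hη1 : η < 1)
    (hτε : τ * ε ≤ 1) (hv : vmin ≤ vmax) (ha : amin ≤ amax)
    (hcond : ε * vmax - η * amax > (1 - η) * amin)
    (hvub : v ≤ vmax) (huprev : uprev ≤ amax) :
    (vmax - (1 - τ * ε) * v - τ * η * uprev) / (τ * (1 - η)) > amin :=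
  a_hi_gt_a_min_general τ ε η vmax amin amax v uprev hτ hη0 hη1 hτε hcond hvub huprev
end

section
/- Let τ > 0, ε ≥ 0, 0 ≤ η < 1, speed limits v_min ≤ v_max, acceleration limits a_min < 0 ≤ a_max, and δ1 > −1. Suppose the current safe-distance slack satisfies g ≥ 0, the leader's next-step speed satisfies v₀⁺ ≥ v_min, the follower's speed satisfies v_min ≤ v ≤ v_max, the previous input satisfies u_prev ≤ a_max, and δ1 is large enough that τ(δ1 + 1)·(ε·v_min − a_min − η·(a_max − a_min)) ≥ v_max − v_min with ε·v_min − a_min − η·(a_max − a_min) > 0. Then ā_d = (εv − η·u_prev + (g + τ(v₀⁺ − v))/(τ²(δ1 + 1)))/(1 − η) satisfies ā_d ≥ a_min. -/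
/-!
Write `c = ε vmin - amin - η (amax - amin)`. Since `v ≥ vmin` and `uprev ≤ amax`, the control
part `ε v - η uprev` is at least `ε vmin - η amax`, so it suffices that the slack term is at
least `-c`. Its numerator is at least `-τ (vmax - vmin)`, and the choice of `δ1` makes
`(vmax - vmin) / (τ (δ1 + 1)) ≤ c`.
-/

theorem neg_le_slack_div {τ δ1 g v₀' v vmin vmax c : ℝ} (hτ : 0 < τ) (hδ1 : -1 < δ1)
    (hg : 0 ≤ g) (hv₀' : vmin ≤ v₀') (hvub : v ≤ vmax)
    (hδ1big : vmax - vmin ≤ τ * (δ1 + 1) * c) :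
    -c ≤ (g + τ * (v₀' - v)) / (τ ^ 2 * (δ1 + 1)) := by
  have hδ1' : 0 < δ1 + 1 := by linarith
  rw [le_div_iff₀ (by positivity)]
  calc -c * (τ ^ 2 * (δ1 + 1)) = -(τ * (τ * (δ1 + 1) * c)) := by ring
    _ ≤ -(τ * (vmax - vmin)) := by gcongr
    _ ≤ g + τ * (v₀' - v) := by nlinarith

theorem a_d_ge_a_min_general
    (τ ε η vmin vmax amin amax δ1 g v₀' v uprev : ℝ)
    (hτ : 0 < τ) (hε : 0 ≤ ε) (hη0 : 0 ≤ η) (hη1 : η < 1)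
    (hδ1 : -1 < δ1)
    (hg : 0 ≤ g) (hv₀' : vmin ≤ v₀')
    (hvlb : vmin ≤ v) (hvub : v ≤ vmax) (huprev : uprev ≤ amax)
    (hδ1big : τ * (δ1 + 1) * (ε * vmin - amin - η * (amax - amin)) ≥
      vmax - vmin) :
    (ε * v - η * uprev + (g + τ * (v₀' - v)) / (τ ^ 2 * (δ1 + 1))) /
      (1 - η) ≥ amin := by
  have hslack := neg_le_slack_div hτ hδ1 hg hv₀' hvub hδ1big
  have hspeed : ε * vmin ≤ ε * v := mul_le_mul_of_nonneg_left hvlb hε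
  have hinput : η * uprev ≤ η * amax := mul_le_mul_of_nonneg_left huprev hη0
  rw [ge_iff_le, le_div_iff₀ (by linarith)]
  linarith

/-- the safe-distance control bound `ā_d` is at least the
minimum acceleration `a_min` when `δ1` is large enough. -/
theorem a_d_ge_a_min
    (τ ε η vmin vmax amin amax δ1 g v₀' v uprev : ℝ)
    (hτ : 0 < τ) (hε : 0 ≤ ε) (hη0 : 0 ≤ η) (hη1 : η < 1)
    (hv : vmin ≤ vmax) (hamin : amin < 0) (hamax : 0 ≤ amax)
    (hδ1 : -1 < δ1)
    (hg : 0 ≤ g) (hv₀' : vmin ≤ v₀')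
    (hvlb : vmin ≤ v) (hvub : v ≤ vmax) (huprev : uprev ≤ amax)
    (hδ1big : τ * (δ1 + 1) * (ε * vmin - amin - η * (amax - amin)) ≥
      vmax - vmin)
    (hpos : 0 < ε * vmin - amin - η * (amax - amin)) :
    (ε * v - η * uprev + (g + τ * (v₀' - v)) / (τ ^ 2 * (δ1 + 1))) /
      (1 - η) ≥ amin :=
  a_d_ge_a_min_general τ ε η vmin vmax amin amax δ1 g v₀' v uprev hτ hε hη0 hη1 hδ1 hg hv₀' hvlb
    hvub huprev hδ1big
end

section
/- Let τ > 0, ε ≥ 0, 0 ≤ η < 1, δ1 ≥ 0, and v_min be the minimum speed. Suppose the current safe-distance slack satisfies g ≥ 0, the leader's next-step speed satisfies v₀⁺ ≥ v_min, and the follower's speed satisfies v ≥ v_min. Then ā_d = (εv − η·u_prev + (g + τ(v₀⁺ − v))/(τ²(δ1 + 1)))/(1 − η) and a_lo = (v_min − (1 − τε)v − τη·u_prev)/(τ(1 − η)) satisfy ā_d ≥ a_lo; in fact τ(1 − η)(ā_d − a_lo) = (g/τ + v₀⁺ − v_min + δ1(v − v_min))/(δ1 + 1). -/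
/-! The gap `τ(1 - η)(ā_d - a_lo)` is an affine identity in which the control terms `εv` and
`η·u_prev` cancel; what is left is a convex combination, with weights `1/(δ1 + 1)` and
`δ1/(δ1 + 1)`, of the leader's speed margin plus `g/τ` and the follower's speed margin,
all of which are nonnegative. -/

namespace Platoon

noncomputable def safeDistanceBound (τ ε η δ1 g v₀' v uprev : ℝ) : ℝ :=
  (ε * v - η * uprev + (g + τ * (v₀' - v)) / (τ ^ 2 * (δ1 + 1))) / (1 - η)

noncomputable def speedLowerBound (τ ε η vmin v uprev : ℝ) : ℝ :=
  (vmin - (1 - τ * ε) * v - τ * η * uprev) / (τ * (1 - η))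

theorem mul_safeDistanceBound_sub_speedLowerBound {τ η δ1 : ℝ} (ε vmin g v₀' v uprev : ℝ)
    (hτ : τ ≠ 0) (hη : η ≠ 1) (hδ1 : δ1 + 1 ≠ 0) :
    τ * (1 - η) *
        (safeDistanceBound τ ε η δ1 g v₀' v uprev - speedLowerBound τ ε η vmin v uprev) =
      (g / τ + v₀' - vmin + δ1 * (v - vmin)) / (δ1 + 1) := by
  have hη' : 1 - η ≠ 0 := sub_ne_zero.mpr (Ne.symm hη)
  unfold safeDistanceBound speedLowerBound
  field_simp
  ring

theorem weighted_speed_margin_nonneg {τ δ1 vmin g v₀' v : ℝ} (hτ : 0 < τ) (hδ1 : 0 ≤ δ1)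
    (hg : 0 ≤ g) (hv₀' : vmin ≤ v₀') (hv : vmin ≤ v) :
    0 ≤ (g / τ + v₀' - vmin + δ1 * (v - vmin)) / (δ1 + 1) := by
  have hleader : 0 ≤ g / τ + (v₀' - vmin) :=
    add_nonneg (div_nonneg hg hτ.le) (sub_nonneg.mpr hv₀')
  have hfollower : 0 ≤ δ1 * (v - vmin) := mul_nonneg hδ1 (sub_nonneg.mpr hv)
  apply div_nonneg _ (by linarith)
  linarith

end Platoon

theorem a_d_ge_a_lo_general
    (τ ε η δ1 vmin g v₀' v uprev : ℝ)
    (hτ : 0 < τ) (hη1 : η < 1)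
    (hδ1 : 0 ≤ δ1)
    (hg : 0 ≤ g) (hv₀' : vmin ≤ v₀') (hvlb : vmin ≤ v) :
    (ε * v - η * uprev + (g + τ * (v₀' - v)) / (τ ^ 2 * (δ1 + 1))) /
        (1 - η) ≥
      (vmin - (1 - τ * ε) * v - τ * η * uprev) / (τ * (1 - η)) ∧
    τ * (1 - η) *
        ((ε * v - η * uprev + (g + τ * (v₀' - v)) / (τ ^ 2 * (δ1 + 1))) /
            (1 - η) -
          (vmin - (1 - τ * ε) * v - τ * η * uprev) / (τ * (1 - η))) =
      (g / τ + v₀' - vmin + δ1 * (v - vmin)) / (δ1 + 1) := by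
  have hgap := Platoon.mul_safeDistanceBound_sub_speedLowerBound ε vmin g v₀' v uprev
    hτ.ne' hη1.ne (add_pos_of_nonneg_of_pos hδ1 one_pos).ne'
  refine ⟨?_, hgap⟩
  have hscale : 0 < τ * (1 - η) := mul_pos hτ (sub_pos.mpr hη1)
  have hprod := Platoon.weighted_speed_margin_nonneg hτ hδ1 hg hv₀' hvlb
  rw [← hgap] at hprod
  exact sub_nonneg.mp (nonneg_of_mul_nonneg_right hprod hscale)

/-- the safe-distance control bound `ā_d` is at least the
lower speed-limit bound `a_lo`, with an explicit identity for their gap. -/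
theorem a_d_ge_a_lo
    (τ ε η δ1 vmin g v₀' v uprev : ℝ)
    (hτ : 0 < τ) (hε : 0 ≤ ε) (hη0 : 0 ≤ η) (hη1 : η < 1)
    (hδ1 : 0 ≤ δ1)
    (hg : 0 ≤ g) (hv₀' : vmin ≤ v₀') (hvlb : vmin ≤ v) :
    (ε * v - η * uprev + (g + τ * (v₀' - v)) / (τ ^ 2 * (δ1 + 1))) /
        (1 - η) ≥
      (vmin - (1 - τ * ε) * v - τ * η * uprev) / (τ * (1 - η)) ∧
    τ * (1 - η) *
        ((ε * v - η * uprev + (g + τ * (v₀' - v)) / (τ ^ 2 * (δ1 + 1))) /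
            (1 - η) -
          (vmin - (1 - τ * ε) * v - τ * η * uprev) / (τ * (1 - η))) =
      (g / τ + v₀' - vmin + δ1 * (v - vmin)) / (δ1 + 1) :=
  a_d_ge_a_lo_general τ ε η δ1 vmin g v₀' v uprev hτ hη1 hδ1 hg hv₀' hvlb
end

section
/- (Lemma 1, one-step feasibility.) Let τ > 0, ε ≥ 0, 0 ≤ η < 1 with τε ≤ 1, speed limits v_min ≤ v_max, acceleration limits a_min < 0 ≤ a_max with ε·v_min − η·a_min < (1 − η)·a_max and ε·v_max − η·a_max > (1 − η)·a_min, spacing parameters δ2 = 1/2 and δ1 ≥ 1 with τ(δ1 + 1)·(ε·v_min − a_min − η·(a_max − a_min)) ≥ v_max − v_min and ε·v_min − a_min − η·(a_max − a_min) > 0. Suppose the follower state is feasible: v_min ≤ v ≤ v_max, a_min ≤ u_prev ≤ a_max, and the safe-distance slack g ≥ 0; also v_min ≤ v₀ ≤ v_max and v_min ≤ v₀⁺ ≤ v_max for the leader's current and next-step speeds. Then max(a_min, a_lo) ≤ min(a_max, a_hi, ā_d), and every control input u with max(a_min, a_lo) ≤ u ≤ min(a_max, a_hi, ā_d) yields a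 feasible next state: a_min ≤ u ≤ a_max, v_min ≤ v⁺ ≤ v_max, and g⁺ ≥ 0, where ŭ = (1 − η)u − εv + η·u_prev, v⁺ = v + τŭ, and g⁺ = g + τ(v₀⁺ − v) − τ²(δ1 + 1)·ŭ. -/
/-! The next speed `v⁺` is strictly increasing and the next slack `g⁺` strictly decreasing in the
input `u`, both affine, and `a_lo`, `a_hi`, `ā_d` are exactly the inputs at which `v⁺ = v_min`,
`v⁺ = v_max` and `g⁺ = 0`. So every input of the interval is feasible, and the interval is
nonempty as soon as the constraints hold at its candidate endpoints: at `a_min` and `a_max` this is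
what the conditions on the acceleration limits and on `δ1` say, and at `a_lo` the slack is
`g + τ (v₀⁺ - v_min) + τ δ1 (v - v_min) ≥ 0`. -/

namespace Platoon

def effAccel (ε η v uprev u : ℝ) : ℝ := (1 - η) * u - ε * v + η * uprev

def nextSpeed (τ ε η v uprev u : ℝ) : ℝ := v + τ * effAccel ε η v uprev u

/-- The input whose next speed is `w`; `a_lo` and `a_hi` are its values at `v_min` and `v_max`. -/
noncomputable def inputForSpeed (τ ε η v uprev w : ℝ) : ℝ :=
  (w - (1 - τ * ε) * v - τ * η * uprev) / (τ * (1 - η))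

def nextSlack (τ ε η δ1 g v₀' v uprev u : ℝ) : ℝ :=
  g + τ * (v₀' - v) - τ ^ 2 * (δ1 + 1) * effAccel ε η v uprev u

/-- The bound `ā_d`: the input at which the next slack vanishes. -/
noncomputable def slackInputBound (τ ε η δ1 g v₀' v uprev : ℝ) : ℝ :=
  (ε * v - η * uprev + (g + τ * (v₀' - v)) / (τ ^ 2 * (δ1 + 1))) / (1 - η)

section Speed

variable {τ ε η v uprev : ℝ}

theorem strictMono_nextSpeed (hτ : 0 < τ) (hη : η < 1) :
    StrictMono (nextSpeed τ ε η v uprev) := by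
  intro u u' huu'
  have := mul_pos (mul_pos hτ (sub_pos.2 hη)) (sub_pos.2 huu')
  simp only [nextSpeed, effAccel]
  linarith

theorem nextSpeed_inputForSpeed (hτ : τ ≠ 0) (hη : η ≠ 1) (w : ℝ) :
    nextSpeed τ ε η v uprev (inputForSpeed τ ε η v uprev w) = w := by
  have : 1 - η ≠ 0 := sub_ne_zero.2 hη.symm
  simp only [nextSpeed, effAccel, inputForSpeed]
  field_simp
  ring

theorem inputForSpeed_le_iff (hτ : 0 < τ) (hη : η < 1) {w u : ℝ} :
    inputForSpeed τ ε η v uprev w ≤ u ↔ w ≤ nextSpeed τ ε η v uprev u := by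
  rw [← (strictMono_nextSpeed hτ hη).le_iff_le, nextSpeed_inputForSpeed hτ.ne' hη.ne]

theorem le_inputForSpeed_iff (hτ : 0 < τ) (hη : η < 1) {w u : ℝ} :
    u ≤ inputForSpeed τ ε η v uprev w ↔ nextSpeed τ ε η v uprev u ≤ w := by
  rw [← (strictMono_nextSpeed hτ hη).le_iff_le, nextSpeed_inputForSpeed hτ.ne' hη.ne]

variable {vmin vmax amin amax : ℝ}

theorem nextSpeed_amin_le (hτ : 0 < τ) (hη : 0 ≤ η) (hτε : τ * ε ≤ 1) (hv : v ≤ vmax)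
    (huprev : uprev ≤ amax) (hcond : ε * vmax - η * amax > (1 - η) * amin) :
    nextSpeed τ ε η v uprev amin ≤ vmax := by
  have hspeed : (1 - τ * ε) * v ≤ (1 - τ * ε) * vmax :=
    mul_le_mul_of_nonneg_left hv (sub_nonneg.2 hτε)
  have hprev : τ * η * uprev ≤ τ * η * amax :=
    mul_le_mul_of_nonneg_left huprev (mul_nonneg hτ.le hη)
  have hlimits := mul_lt_mul_of_pos_left hcond hτ
  simp only [nextSpeed, effAccel]
  linarith

theorem le_nextSpeed_amax (hτ : 0 < τ) (hη : 0 ≤ η) (hτε : τ * ε ≤ 1) (hv : vmin ≤ v)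
    (huprev : amin ≤ uprev) (hcond : ε * vmin - η * amin < (1 - η) * amax) :
    vmin ≤ nextSpeed τ ε η v uprev amax := by
  have hspeed : (1 - τ * ε) * vmin ≤ (1 - τ * ε) * v :=
    mul_le_mul_of_nonneg_left hv (sub_nonneg.2 hτε)
  have hprev : τ * η * amin ≤ τ * η * uprev :=
    mul_le_mul_of_nonneg_left huprev (mul_nonneg hτ.le hη)
  have hlimits := mul_lt_mul_of_pos_left hcond hτ
  simp only [nextSpeed, effAccel]
  linarith

end Speed

section Slack

variable {τ ε η δ1 g v₀' v uprev : ℝ}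

theorem strictAnti_nextSlack (hτ : 0 < τ) (hδ1 : 0 < δ1 + 1) (hη : η < 1) :
    StrictAnti (nextSlack τ ε η δ1 g v₀' v uprev) := by
  intro u u' huu'
  have := mul_pos (mul_pos (mul_pos (pow_pos hτ 2) hδ1) (sub_pos.2 hη)) (sub_pos.2 huu')
  simp only [nextSlack, effAccel]
  linarith

theorem nextSlack_slackInputBound (hτ : τ ≠ 0) (hδ1 : δ1 + 1 ≠ 0) (hη : η ≠ 1) :
    nextSlack τ ε η δ1 g v₀' v uprev (slackInputBound τ ε η δ1 g v₀' v uprev) = 0 := by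
  have : 1 - η ≠ 0 := sub_ne_zero.2 hη.symm
  simp only [nextSlack, effAccel, slackInputBound]
  field_simp
  ring

theorem le_slackInputBound_iff (hτ : 0 < τ) (hδ1 : 0 < δ1 + 1) (hη : η < 1) {u : ℝ} :
    u ≤ slackInputBound τ ε η δ1 g v₀' v uprev ↔ 0 ≤ nextSlack τ ε η δ1 g v₀' v uprev u := by
  rw [← (strictAnti_nextSlack hτ hδ1 hη).le_iff_ge, nextSlack_slackInputBound hτ.ne' hδ1.ne' hη.ne]

theorem nextSlack_eq (u : ℝ) :
    nextSlack τ ε η δ1 g v₀' v uprev u =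
      g + τ * (v₀' - v) - τ * (δ1 + 1) * (nextSpeed τ ε η v uprev u - v) := by
  simp only [nextSlack, nextSpeed]
  ring

variable {vmin vmax amin amax : ℝ}

theorem nextSlack_inputForSpeed_vmin_nonneg (hτ : 0 < τ) (hη : η < 1) (hδ1 : 0 ≤ δ1)
    (hg : 0 ≤ g) (hv : vmin ≤ v) (hv₀' : vmin ≤ v₀') :
    0 ≤ nextSlack τ ε η δ1 g v₀' v uprev (inputForSpeed τ ε η v uprev vmin) := by
  rw [nextSlack_eq, nextSpeed_inputForSpeed hτ.ne' hη.ne]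
  have hleader := mul_nonneg hτ.le (sub_nonneg.2 hv₀')
  have hfollower := mul_nonneg (mul_nonneg hτ.le hδ1) (sub_nonneg.2 hv)
  linarith

theorem effAccel_amin_le (hε : 0 ≤ ε) (hη : 0 ≤ η) (hv : vmin ≤ v) (huprev : uprev ≤ amax) :
    effAccel ε η v uprev amin ≤ -(ε * vmin - amin - η * (amax - amin)) := by
  have := mul_le_mul_of_nonneg_left hv hε
  have := mul_le_mul_of_nonneg_left huprev hη
  simp only [effAccel]
  linarith

theorem nextSlack_amin_nonneg (hτ : 0 < τ) (hδ1 : 0 < δ1 + 1) (hε : 0 ≤ ε) (hη : 0 ≤ η)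
    (hg : 0 ≤ g) (hvmin : vmin ≤ v) (hvmax : v ≤ vmax) (hv₀' : vmin ≤ v₀')
    (huprev : uprev ≤ amax)
    (hδ1big : τ * (δ1 + 1) * (ε * vmin - amin - η * (amax - amin)) ≥ vmax - vmin) :
    0 ≤ nextSlack τ ε η δ1 g v₀' v uprev amin := by
  have hbrake : τ ^ 2 * (δ1 + 1) * (ε * vmin - amin - η * (amax - amin)) ≤
      -(τ ^ 2 * (δ1 + 1) * effAccel ε η v uprev amin) := by
    rw [← mul_neg]
    exact mul_le_mul_of_nonneg_left (le_neg_of_le_neg (effAccel_amin_le hε hη hvmin huprev))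
      (by positivity)
  have hmargin := mul_le_mul_of_nonneg_left hδ1big hτ.le
  have hleader := mul_le_mul_of_nonneg_left (sub_le_sub hv₀' hvmax) hτ.le
  simp only [nextSlack]
  linarith

end Slack

end Platoon

open Platoon in
theorem one_step_feasibility_general
    (τ ε η vmin vmax amin amax δ1 g v₀' v uprev : ℝ)
    (hτ : 0 < τ) (hε : 0 ≤ ε) (hη0 : 0 ≤ η) (hη1 : η < 1)
    (hτε : τ * ε ≤ 1) (hv : vmin ≤ vmax)
    (hamin : amin < 0) (hamax : 0 ≤ amax)
    (hcond1 : ε * vmin - η * amin < (1 - η) * amax)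
    (hcond2 : ε * vmax - η * amax > (1 - η) * amin)
    (hδ1 : 1 ≤ δ1)
    (hδ1big : τ * (δ1 + 1) * (ε * vmin - amin - η * (amax - amin)) ≥
      vmax - vmin)
    (hvlb : vmin ≤ v) (hvub : v ≤ vmax)
    (huprevlb : amin ≤ uprev) (huprevub : uprev ≤ amax)
    (hg : 0 ≤ g)
    (hv₀'lb : vmin ≤ v₀') :
    max amin ((vmin - (1 - τ * ε) * v - τ * η * uprev) / (τ * (1 - η))) ≤
      min amax
        (min ((vmax - (1 - τ * ε) * v - τ * η * uprev) / (τ * (1 - η)))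
          ((ε * v - η * uprev + (g + τ * (v₀' - v)) / (τ ^ 2 * (δ1 + 1))) /
            (1 - η))) ∧
    ∀ u : ℝ,
      max amin ((vmin - (1 - τ * ε) * v - τ * η * uprev) / (τ * (1 - η))) ≤
          u →
      u ≤ min amax
          (min ((vmax - (1 - τ * ε) * v - τ * η * uprev) / (τ * (1 - η)))
            ((ε * v - η * uprev + (g + τ * (v₀' - v)) / (τ ^ 2 * (δ1 + 1))) /
              (1 - η))) →
      amin ≤ u ∧ u ≤ amax ∧
      vmin ≤ v + τ * ((1 - η) * u - ε * v + η * uprev) ∧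
      v + τ * ((1 - η) * u - ε * v + η * uprev) ≤ vmax ∧
      0 ≤ g + τ * (v₀' - v) -
          τ ^ 2 * (δ1 + 1) * ((1 - η) * u - ε * v + η * uprev) := by
  have hδ1pos : 0 < δ1 + 1 := by linarith
  have hlo_le_hi : inputForSpeed τ ε η v uprev vmin ≤ inputForSpeed τ ε η v uprev vmax := by
    rw [inputForSpeed_le_iff hτ hη1, nextSpeed_inputForSpeed hτ.ne' hη1.ne]
    exact hv
  refine ⟨max_le (le_min (hamin.le.trans hamax) (le_min ?_ ?_)) (le_min ?_ (le_min hlo_le_hi ?_)),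
    fun u hlo hhi => ?_⟩
  · exact (le_inputForSpeed_iff hτ hη1).2 (nextSpeed_amin_le hτ hη0 hτε hvub huprevub hcond2)
  · exact (le_slackInputBound_iff hτ hδ1pos hη1).2
      (nextSlack_amin_nonneg hτ hδ1pos hε hη0 hg hvlb hvub hv₀'lb huprevub hδ1big)
  · exact (inputForSpeed_le_iff hτ hη1).2 (le_nextSpeed_amax hτ hη0 hτε hvlb huprevlb hcond1)
  · exact (le_slackInputBound_iff hτ hδ1pos hη1).2
      (nextSlack_inputForSpeed_vmin_nonneg hτ hη1 (by linarith) hg hvlb hv₀'lb)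
  · obtain ⟨hamin_u, hlo_u⟩ := max_le_iff.1 hlo
    obtain ⟨hu_amax, hu_hi, hu_slack⟩ : u ≤ amax ∧ _ ∧ _ := by
      simpa only [le_min_iff] using hhi
    exact ⟨hamin_u, hu_amax, (inputForSpeed_le_iff hτ hη1).1 hlo_u,
      (le_inputForSpeed_iff hτ hη1).1 hu_hi, (le_slackInputBound_iff hτ hδ1pos hη1).1 hu_slack⟩

/-- Lemma 1, one-step feasibility: from a feasible state the
feasible control interval `[max(a_min, a_lo), min(a_max, a_hi, ā_d)]` is
nonempty, and every control input in it yields a feasible next state. -/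
theorem one_step_feasibility
    (τ ε η vmin vmax amin amax δ1 g v₀ v₀' v uprev : ℝ)
    (hτ : 0 < τ) (hε : 0 ≤ ε) (hη0 : 0 ≤ η) (hη1 : η < 1)
    (hτε : τ * ε ≤ 1) (hv : vmin ≤ vmax)
    (hamin : amin < 0) (hamax : 0 ≤ amax)
    (hcond1 : ε * vmin - η * amin < (1 - η) * amax)
    (hcond2 : ε * vmax - η * amax > (1 - η) * amin)
    (hδ1 : 1 ≤ δ1)
    (hδ1big : τ * (δ1 + 1) * (ε * vmin - amin - η * (amax - amin)) ≥
      vmax - vmin)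
    (hpos : 0 < ε * vmin - amin - η * (amax - amin))
    (hvlb : vmin ≤ v) (hvub : v ≤ vmax)
    (huprevlb : amin ≤ uprev) (huprevub : uprev ≤ amax)
    (hg : 0 ≤ g)
    (hv₀lb : vmin ≤ v₀) (hv₀ub : v₀ ≤ vmax)
    (hv₀'lb : vmin ≤ v₀') (hv₀'ub : v₀' ≤ vmax) :
    max amin ((vmin - (1 - τ * ε) * v - τ * η * uprev) / (τ * (1 - η))) ≤
      min amax
        (min ((vmax - (1 - τ * ε) * v - τ * η * uprev) / (τ * (1 - η)))
          ((ε * v - η * uprev + (g + τ * (v₀' - v)) / (τ ^ 2 * (δ1 + 1))) /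
            (1 - η))) ∧
    ∀ u : ℝ,
      max amin ((vmin - (1 - τ * ε) * v - τ * η * uprev) / (τ * (1 - η))) ≤
          u →
      u ≤ min amax
          (min ((vmax - (1 - τ * ε) * v - τ * η * uprev) / (τ * (1 - η)))
            ((ε * v - η * uprev + (g + τ * (v₀' - v)) / (τ ^ 2 * (δ1 + 1))) /
              (1 - η))) →
      amin ≤ u ∧ u ≤ amax ∧
      vmin ≤ v + τ * ((1 - η) * u - ε * v + η * uprev) ∧
      v + τ * ((1 - η) * u - ε * v + η * uprev) ≤ vmax ∧
      0 ≤ g + τ * (v₀' - v) -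
          τ ^ 2 * (δ1 + 1) * ((1 - η) * u - ε * v + η * uprev) :=
  one_step_feasibility_general τ ε η vmin vmax amin amax δ1 g v₀' v uprev hτ hε hη0 hη1 hτε hv hamin
    hamax hcond1 hcond2 hδ1 hδ1big hvlb hvub huprevlb huprevub hg hv₀'lb
end

section
/- (Lemma 1, sequential feasibility.) Let τ > 0, ε ≥ 0, 0 ≤ η < 1 with τε ≤ 1, speed limits v_min ≤ v_max, acceleration limits a_min < 0 ≤ a_max with ε·v_min − η·a_min < (1 − η)·a_max and ε·v_max − η·a_max > (1 − η)·a_min, spacing parameters δ2 = 1/2 and δ1 ≥ 1 with τ(δ1 + 1)·(ε·v_min − a_min − η·(a_max − a_min)) ≥ v_max − v_min and ε·v_min − a_min − η·(a_max − a_min) > 0. Let the leader's speeds (v₀(k))_{k∈ℕ} satisfy v_min ≤ v₀(k) ≤ v_max for all k, with positions x₀(k+1) = x₀(k) + τ·v₀(k) + (τ²/2)·(v₀(k+1) − v₀(k))/τ·τ, i.e., consistent double-integrator updates. Suppose the follower's initial state satisfies v_min ≤ v(0) ≤ v_max, a_min ≤ u_prev(0) ≤ a_max, and g(0) ≥ 0.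 Then there exists a control sequence (u(k))_{k∈ℕ} with a_min ≤ u(k) ≤ a_max such that, under the follower dynamics ŭ(k) = (1 − η)u(k) − εv(k) + η·u(k−1), v(k+1) = v(k) + τ·ŭ(k), x(k+1) = x(k) + τ·v(k) + (τ²/2)·ŭ(k), the feasibility conditions v_min ≤ v(k) ≤ v_max and g(k) ≥ 0 hold for every k ∈ ℕ. -/
/-- Auxiliary state recursion for the sequential feasibility proof:
the state is `(v, x, uprev)`. -/
noncomputable def seqFeasState (τ ε η vmin amin : ℝ) (v0 x0 up0 : ℝ) : ℕ → ℝ × ℝ × ℝ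
  | 0 => (v0, x0, up0)
  | (k+1) =>
    let p := seqFeasState τ ε η vmin amin v0 x0 up0 k
    let F := max ((1-η)*amin + η*p.2.2 - ε*p.1) ((vmin - p.1)/τ)
    (p.1 + τ * F, p.2.1 + τ*p.1 + τ^2/2 * F, (F + ε*p.1 - η*p.2.2)/(1-η))

/-- Lemma 1, sequential feasibility: starting from a feasible
initial state, there is a control sequence respecting the acceleration limits
such that the speed limits and the safe-distance slack nonnegativity hold at
every time step. -/
theorem sequential_feasibility
    (τ ε η vmin vmax amin amax δ1 L : ℝ)
    (hτ : 0 < τ) (hε : 0 ≤ ε) (hη0 : 0 ≤ η) (hη1 : η < 1)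
    (hτε : τ * ε ≤ 1) (hv : vmin ≤ vmax)
    (hamin : amin < 0) (hamax : 0 ≤ amax)
    (hcond1 : ε * vmin - η * amin < (1 - η) * amax)
    (hcond2 : ε * vmax - η * amax > (1 - η) * amin)
    (hδ1 : 1 ≤ δ1)
    (hδ1big : τ * (δ1 + 1) * (ε * vmin - amin - η * (amax - amin)) ≥
      vmax - vmin)
    (hpos : 0 < ε * vmin - amin - η * (amax - amin))
    (v₀ x₀ : ℕ → ℝ)
    (hv₀ : ∀ k, vmin ≤ v₀ k ∧ v₀ k ≤ vmax)
    (hx₀ : ∀ k, x₀ (k + 1) =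
      x₀ k + τ * v₀ k + τ ^ 2 / 2 * ((v₀ (k + 1) - v₀ k) / τ))
    (vinit xinit uprev0 : ℝ)
    (hvinit : vmin ≤ vinit ∧ vinit ≤ vmax)
    (huprev0 : amin ≤ uprev0 ∧ uprev0 ≤ amax)
    (hg0 : 0 ≤ (x₀ 0 - xinit) -
      (L + δ1 * τ * vinit + 1 / 2 * τ * (vinit - v₀ 0))) :
    ∃ u v x : ℕ → ℝ,
      v 0 = vinit ∧ x 0 = xinit ∧
      (∀ k, amin ≤ u k ∧ u k ≤ amax) ∧
      (∀ k, v (k + 1) = v k + τ *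
        ((1 - η) * u k - ε * v k +
          η * (if k = 0 then uprev0 else u (k - 1)))) ∧
      (∀ k, x (k + 1) = x k + τ * v k + τ ^ 2 / 2 *
        ((1 - η) * u k - ε * v k +
          η * (if k = 0 then uprev0 else u (k - 1)))) ∧
      (∀ k, vmin ≤ v k ∧ v k ≤ vmax ∧
        0 ≤ (x₀ k - x k) -
          (L + δ1 * τ * v k + 1 / 2 * τ * (v k - v₀ k))) := by
  have hη' : (0:ℝ) < 1 - η := by linarith
  have hτ' : τ ≠ 0 := ne_of_gt hτ
  -- generic one-step feasibility lemma
  have hstep : ∀ p q g w : ℝ, vmin ≤ p → p ≤ vmax → amin ≤ q → q ≤ amax →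
      0 ≤ g → vmin ≤ w → w ≤ vmax →
      ∀ f : ℝ, f = max ((1-η)*amin + η*q - ε*p) ((vmin - p)/τ) →
      (amin ≤ (f + ε*p - η*q)/(1-η) ∧ (f + ε*p - η*q)/(1-η) ≤ amax ∧
       vmin ≤ p + τ*f ∧ p + τ*f ≤ vmax ∧
       0 ≤ g + τ*(w - p) - τ^2*(δ1+1)*f) := by
    intro p q g w h1 h2 h3 h4 h5 h6 h7 f hf
    subst hf
    have hMle : (1-η)*amin + η*q - ε*p ≤ -(ε*vmin - amin - η*(amax-amin)) := by
      linarith [mul_nonneg hη0 (by linarith : (0:ℝ) ≤ amax - q),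
        mul_nonneg hε (by linarith : (0:ℝ) ≤ p - vmin)]
    have hfa : (1-η)*amin + η*q - ε*p ≤ max ((1-η)*amin + η*q - ε*p) ((vmin - p)/τ) :=
      le_max_left _ _
    have hfb : (vmin - p)/τ ≤ max ((1-η)*amin + η*q - ε*p) ((vmin - p)/τ) :=
      le_max_right _ _
    have hfb' : vmin - p ≤ max ((1-η)*amin + η*q - ε*p) ((vmin - p)/τ) * τ :=
      (div_le_iff₀ hτ).mp hfb
    refine ⟨?_, ?_, by linarith [hfb'], ?_, ?_⟩
    · rw [le_div_iff₀ hη']; linarith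
    · rw [div_le_iff₀ hη']
      have h_a : (1-η)*amin + η*q - ε*p ≤ amax*(1-η) - ε*p + η*q := by
        have := mul_le_mul_of_nonneg_left (show amin ≤ amax by linarith) hη'.le
        linarith
      have h_b : (vmin - p)/τ ≤ amax*(1-η) - ε*p + η*q := by
        rw [div_le_iff₀ hτ]
        linarith [mul_nonneg (by linarith : (0:ℝ) ≤ 1 - τ*ε)
            (by linarith : (0:ℝ) ≤ p - vmin),
          mul_nonneg (mul_nonneg hτ.le hη0) (by linarith : (0:ℝ) ≤ q - amin),
          mul_pos hτ (by linarith : (0:ℝ) < (1-η)*amax - (ε*vmin - η*amin))]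
      linarith [max_le h_a h_b]
    · rcases le_total ((1-η)*amin + η*q - ε*p) ((vmin - p)/τ) with hc | hc
      · rw [max_eq_right hc]
        have hfe : τ * ((vmin - p)/τ) = vmin - p := by field_simp
        linarith
      · rw [max_eq_left hc]
        linarith [mul_nonneg hτ.le
          (by linarith : (0:ℝ) ≤ -((1-η)*amin + η*q - ε*p))]
    · rcases le_total ((1-η)*amin + η*q - ε*p) ((vmin - p)/τ) with hc | hc
      · rw [max_eq_right hc]
        have hfe : τ^2*(δ1+1)*((vmin - p)/τ) = τ*(δ1+1)*(vmin - p) := by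
          field_simp
        rw [hfe]
        linarith [mul_nonneg hτ.le (by linarith : (0:ℝ) ≤ w - vmin),
          mul_nonneg (mul_nonneg hτ.le (by linarith : (0:ℝ) ≤ δ1))
            (by linarith : (0:ℝ) ≤ p - vmin)]
      · rw [max_eq_left hc]
        have key : τ*(vmax - vmin) ≤ τ*(τ*(δ1+1)*(ε*vmin - amin - η*(amax-amin))) :=
          mul_le_mul_of_nonneg_left hδ1big hτ.le
        have hD : 0 ≤ τ^2*(δ1+1) *
            (-(ε*vmin - amin - η*(amax-amin)) - ((1-η)*amin + η*q - ε*p)) :=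
          mul_nonneg (mul_nonneg (sq_nonneg τ) (by linarith)) (by linarith)
        linarith [hD, key,
          mul_nonneg hτ.le (by linarith : (0:ℝ) ≤ w - vmin),
          mul_nonneg hτ.le (by linarith : (0:ℝ) ≤ vmax - p)]
  set s : ℕ → ℝ × ℝ × ℝ := seqFeasState τ ε η vmin amin vinit xinit uprev0 with hs
  set F : ℕ → ℝ := fun k =>
    max ((1-η)*amin + η*(s k).2.2 - ε*(s k).1) ((vmin - (s k).1)/τ) with hF
  have hs0 : s 0 = (vinit, xinit, uprev0) := rfl
  have hsucc : ∀ k, s (k+1) =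
      ((s k).1 + τ * F k, (s k).2.1 + τ*(s k).1 + τ^2/2 * F k,
        (F k + ε*(s k).1 - η*(s k).2.2)/(1-η)) := by
    intro k
    rw [hs, hF]
    conv_lhs => rw [seqFeasState]
  have hv_eq : ∀ k, (s (k+1)).1 = (s k).1 + τ * F k := by
    intro k; rw [hsucc k]
  have hx_eq : ∀ k, (s (k+1)).2.1 = (s k).2.1 + τ*(s k).1 + τ^2/2 * F k := by
    intro k; rw [hsucc k]
  have hu_eq : ∀ k, (s (k+1)).2.2 = (F k + ε*(s k).1 - η*(s k).2.2)/(1-η) := by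
    intro k; rw [hsucc k]
  have hprev : ∀ k : ℕ, (if k = 0 then uprev0 else (s (k - 1 + 1)).2.2) = (s k).2.2 := by
    intro k
    cases k with
    | zero => simp [hs0]
    | succ n => simp
  have heff : ∀ k : ℕ, (1 - η) * (s (k+1)).2.2 - ε * (s k).1 +
      η * (if k = 0 then uprev0 else (s (k - 1 + 1)).2.2) = F k := by
    intro k
    rw [hprev k, hu_eq k]
    field_simp
    ring
  -- invariant
  have inv : ∀ k, vmin ≤ (s k).1 ∧ (s k).1 ≤ vmax ∧ amin ≤ (s k).2.2 ∧
      (s k).2.2 ≤ amax ∧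
      0 ≤ (x₀ k - (s k).2.1) - (L + δ1*τ*(s k).1 + 1/2*τ*((s k).1 - v₀ k)) := by
    intro k
    induction k with
    | zero => exact ⟨hvinit.1, hvinit.2, huprev0.1, huprev0.2, hg0⟩
    | succ n ih =>
      obtain ⟨i1, i2, i3, i4, i5⟩ := ih
      obtain ⟨s1, s2, s3, s4, s5⟩ :=
        hstep (s n).1 (s n).2.2 _ (v₀ (n+1)) i1 i2 i3 i4 i5
          (hv₀ (n+1)).1 (hv₀ (n+1)).2 (F n) (by rw [hF])
      have gid : (x₀ (n+1) - (s (n+1)).2.1) -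
          (L + δ1*τ*(s (n+1)).1 + 1/2*τ*((s (n+1)).1 - v₀ (n+1)))
          = ((x₀ n - (s n).2.1) - (L + δ1*τ*(s n).1 + 1/2*τ*((s n).1 - v₀ n)))
            + τ*(v₀ (n+1) - (s n).1) - τ^2*(δ1+1)*(F n) := by
        rw [hx₀ n, hv_eq n, hx_eq n]
        field_simp
        ring
      refine ⟨?_, ?_, ?_, ?_, ?_⟩
      · rw [hv_eq n]; exact s3
      · rw [hv_eq n]; exact s4
      · rw [hu_eq n]; exact s1
      · rw [hu_eq n]; exact s2
      · rw [gid]; exact s5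
  refine ⟨fun k => (s (k+1)).2.2, fun k => (s k).1, fun k => (s k).2.1, rfl, rfl,
    ?_, ?_, ?_, ?_⟩
  · intro k
    obtain ⟨_, _, h3, h4, _⟩ := inv (k+1)
    exact ⟨h3, h4⟩
  · intro k
    show (s (k+1)).1 = (s k).1 + τ * _
    rw [heff k, hv_eq k]
  · intro k
    show (s (k+1)).2.1 = (s k).2.1 + τ*(s k).1 + τ^2/2 * _
    rw [heff k, hx_eq k]
  · intro k
    obtain ⟨h1, h2, _, _, h5⟩ := inv k
    exact ⟨h1, h2, h5⟩
end

section
/- Let v₀ > 0, τ > 0, a_min < 0 ≤ a_max, and define D(δ) = (2v₀ + δv₀ + 2τ·a_max − τ·a_min)/(2v₀ + δv₀ + 2τ·a_max − 3τ·a_min) for δ ≥ 0. Let (δ_p)_{p∈ℕ} be given by δ_0 ≥ 0 and δ_{p+1} = δ_p·D(δ_p). Then for every p: 0 ≤ δ_{p+1} ≤ δ_p, and the geometric bounds δ_0·D(0)^p ≤ δ_p ≤ δ_0·D(δ_0)^p hold; consequently the follower speed v₀(1 + δ_p) never drops below v₀ and converges geometrically to v₀. -/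
/-!
Writing `s = 2v₀ + δv₀ + 2τ·a_max − τ·a_min`, the factor is `D(δ) = s / (s + b)` with
`b = −2τ·a_min > 0`. Since `s > 0` grows with `δ ≥ 0`, `D` maps `[0, ∞)` monotonically into
`(0, 1)`. Hence `δ_p` stays nonnegative and decreases, so `D(0) ≤ D(δ_p) ≤ D(δ_0)` at every step,
which gives the two geometric bounds; the upper one forces `δ_p → 0`.
-/

open Filter Set Topology

section AffineRatio

variable {c v b : ℝ}

lemma affineRatio_pos (hc : 0 < c) (hv : 0 ≤ v) (hb : 0 ≤ b) {x : ℝ} (hx : 0 ≤ x) :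
    0 < (c + x * v) / (c + x * v + b) := by
  have : 0 ≤ x * v := mul_nonneg hx hv
  exact div_pos (by linarith) (by linarith)

lemma affineRatio_lt_one (hc : 0 < c) (hv : 0 ≤ v) (hb : 0 < b) {x : ℝ} (hx : 0 ≤ x) :
    (c + x * v) / (c + x * v + b) < 1 := by
  have : 0 ≤ x * v := mul_nonneg hx hv
  rw [div_lt_one (by linarith)]
  linarith

lemma affineRatio_monotoneOn (hc : 0 < c) (hv : 0 ≤ v) (hb : 0 ≤ b) :
    MonotoneOn (fun x => (c + x * v) / (c + x * v + b)) (Ici 0) := by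
  intro x hx y _ hxy
  have hxv : 0 ≤ x * v := mul_nonneg hx hv
  have hxy' : x * v ≤ y * v := mul_le_mul_of_nonneg_right hxy hv
  rw [div_le_div_iff₀ (by linarith) (by linarith)]
  nlinarith

end AffineRatio

section MultiplicativeRecursion

variable {D : ℝ → ℝ} {δ : ℕ → ℝ}

lemma nonneg_of_mul_rec (hrec : ∀ p, δ (p + 1) = δ p * D (δ p))
    (hD : ∀ x, 0 ≤ x → 0 ≤ D x) (h0 : 0 ≤ δ 0) (p : ℕ) : 0 ≤ δ p := by
  induction p with
  | zero => exact h0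
  | succ n ih => rw [hrec]; exact mul_nonneg ih (hD _ ih)

lemma antitone_of_mul_rec (hrec : ∀ p, δ (p + 1) = δ p * D (δ p))
    (hnn : ∀ p, 0 ≤ δ p) (hD : ∀ x, 0 ≤ x → D x ≤ 1) : Antitone δ :=
  antitone_nat_of_succ_le fun p => by
    rw [hrec]
    exact mul_le_of_le_one_right (hnn p) (hD _ (hnn p))

lemma geometric_lower_bound_of_mul_rec (hrec : ∀ p, δ (p + 1) = δ p * D (δ p))
    (hnn : ∀ p, 0 ≤ δ p) (hD : ∀ x, 0 ≤ x → 0 ≤ D x) (hmono : MonotoneOn D (Ici 0)) (p : ℕ) :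
    δ 0 * D 0 ^ p ≤ δ p := by
  induction p with
  | zero => simp
  | succ n ih =>
    have hstep : D 0 ≤ D (δ n) := hmono (mem_Ici.2 le_rfl) (hnn n) (hnn n)
    calc δ 0 * D 0 ^ (n + 1) = δ 0 * D 0 ^ n * D 0 := by rw [pow_succ, mul_assoc]
      _ ≤ δ n * D (δ n) := mul_le_mul ih hstep (hD 0 le_rfl) (hnn n)
      _ = δ (n + 1) := (hrec n).symm

lemma geometric_upper_bound_of_mul_rec (hrec : ∀ p, δ (p + 1) = δ p * D (δ p))
    (hnn : ∀ p, 0 ≤ δ p) (hanti : Antitone δ) (hD : ∀ x, 0 ≤ x → 0 ≤ D x)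
    (hmono : MonotoneOn D (Ici 0)) (p : ℕ) :
    δ p ≤ δ 0 * D (δ 0) ^ p := by
  induction p with
  | zero => simp
  | succ n ih =>
    have hstep : D (δ n) ≤ D (δ 0) := hmono (hnn n) (hnn 0) (hanti (Nat.zero_le n))
    calc δ (n + 1) = δ n * D (δ n) := hrec n
      _ ≤ δ 0 * D (δ 0) ^ n * D (δ 0) := mul_le_mul ih hstep (hD _ (hnn n))
          (mul_nonneg (hnn 0) (pow_nonneg (hD _ (hnn 0)) n))
      _ = δ 0 * D (δ 0) ^ (n + 1) := by rw [pow_succ, mul_assoc]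

lemma tendsto_zero_of_le_geometric (hnn : ∀ p, 0 ≤ δ p) {r : ℝ} (hr0 : 0 ≤ r) (hr1 : r < 1)
    (hle : ∀ p, δ p ≤ δ 0 * r ^ p) : Tendsto δ atTop (𝓝 0) := by
  have hgeom : Tendsto (fun p => δ 0 * r ^ p) atTop (𝓝 0) := by
    simpa using (tendsto_pow_atTop_nhds_zero_of_lt_one hr0 hr1).const_mul (δ 0)
  exact tendsto_of_tendsto_of_tendsto_of_le_of_le tendsto_const_nhds hgeom hnn hle

end MultiplicativeRecursion

/-- under the recursion `δ_{p+1} = δ_p · D(δ_p)`, the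
speed-discrepancy sequence is nonnegative, nonincreasing, sandwiched by
geometric bounds, and the follower speed `v₀(1 + δ_p)` stays at least `v₀`
and converges to `v₀`. -/
theorem discrepancy_geometric_decay
    (v₀ τ amin amax : ℝ)
    (hv₀ : 0 < v₀) (hτ : 0 < τ) (hamin : amin < 0) (hamax : 0 ≤ amax)
    (D : ℝ → ℝ)
    (hD : ∀ δ, D δ = (2 * v₀ + δ * v₀ + 2 * τ * amax - τ * amin) /
      (2 * v₀ + δ * v₀ + 2 * τ * amax - 3 * τ * amin))
    (δ : ℕ → ℝ) (hδ0 : 0 ≤ δ 0)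
    (hrec : ∀ p, δ (p + 1) = δ p * D (δ p)) :
    (∀ p, 0 ≤ δ (p + 1) ∧ δ (p + 1) ≤ δ p) ∧
    (∀ p, δ 0 * D 0 ^ p ≤ δ p ∧ δ p ≤ δ 0 * D (δ 0) ^ p) ∧
    (∀ p, v₀ ≤ v₀ * (1 + δ p)) ∧
    Filter.Tendsto (fun p => v₀ * (1 + δ p)) Filter.atTop (nhds v₀) := by
  set c := 2 * v₀ + 2 * τ * amax - τ * amin
  set b := -2 * τ * amin
  have hc : 0 < c := by nlinarith
  have hb : 0 < b := by nlinarith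
  have hDeq : D = fun x => (c + x * v₀) / (c + x * v₀ + b) := by
    funext x
    rw [hD]
    congr 1 <;> ring
  have hDnn : ∀ x, 0 ≤ x → 0 ≤ D x := fun x hx => hDeq ▸ (affineRatio_pos hc hv₀.le hb.le hx).le
  have hDlt : ∀ x, 0 ≤ x → D x < 1 := fun x hx => hDeq ▸ affineRatio_lt_one hc hv₀.le hb hx
  have hmono : MonotoneOn D (Ici 0) := hDeq ▸ affineRatio_monotoneOn hc hv₀.le hb.le
  have hnn := nonneg_of_mul_rec hrec hDnn hδ0
  have hanti := antitone_of_mul_rec hrec hnn fun x hx => (hDlt x hx).le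
  have hupper := geometric_upper_bound_of_mul_rec hrec hnn hanti hDnn hmono
  have hlim := tendsto_zero_of_le_geometric hnn (hDnn _ hδ0) (hDlt _ hδ0) hupper
  refine ⟨fun p => ⟨hnn (p + 1), hanti p.le_succ⟩,
    fun p => ⟨geometric_lower_bound_of_mul_rec hrec hnn hDnn hmono p, hupper p⟩,
    fun p => le_mul_of_one_le_right hv₀.le (by linarith [hnn p]), ?_⟩
  simpa using ((tendsto_const_nhds (x := (1 : ℝ))).add hlim).const_mul v₀
end
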